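/- arXiv:2104.04340 — 2 statements merged into one kernel-verified Lean document; each statement's English description precedes it below -/
import Mathlib

section
/- Let T be a real tree with hyperbolic isometries γ, δ such that l(γδ) = l(γδ⁻¹) = l(γ) + l(δ). Then the axes A_γ and A_δ intersect in exactly one point. -/
/-- A real tree: a geodesic metric space which is 0-hyperbolic
(four-point condition), so that any two points are joined by a unique arc,
which is geodesic. -/
def IsRTree (T : Type*) [MetricSpace T] : Prop :=
  (∀ x y : T, ∃ f : ℝ → T, f 0 = x ∧ f (dist x y) = y ∧
    ∀ s ∈ Set.Icc (0 : ℝ) (dist x y), ∀ t ∈ Set.Icc (0 : ℝ) (dist x y),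
      dist (f s) (f t) = |s - t|) ∧
  (∀ x y z w : T, dist x y + dist z w ≤ max (dist x z + dist y w) (dist x w + dist y z))

/-- The translation length `l(γ) = inf_x d(x, γ x)` of an isometry. -/
noncomputable def transLen {T : Type*} [MetricSpace T] (γ : T ≃ᵢ T) : ℝ :=
  ⨅ x : T, dist x (γ x)

/-- The axis `A_γ = {x | d(x, γ x) = l(γ)}` of an isometry. -/
def axisSet {T : Type*} [MetricSpace T] (γ : T ≃ᵢ T) : Set T :=
  {x | dist x (γ x) = transLen γ}

/-- An isometry is hyperbolic if its translation length is attained and positive. -/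
def IsHyperbolicIso {T : Type*} [MetricSpace T] (γ : T ≃ᵢ T) : Prop :=
  0 < transLen γ ∧ (axisSet γ).Nonempty


namespace RTreeAux
variable {T : Type*} [MetricSpace T]

/-- Betweenness: `y` lies on a geodesic from `x` to `z`. -/
def Btw (x y z : T) : Prop := dist x y + dist y z = dist x z

/-- Twice the Gromov product of `y, z` at `x`. -/
noncomputable def Gp (x y z : T) : ℝ := dist x y + dist x z - dist y z

lemma Gp_nonneg (x y z : T) : 0 ≤ Gp x y z := by
  have := dist_triangle y x z
  unfold Gp
  linarith [dist_comm y x]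

lemma Gp_comm (x y z : T) : Gp x y z = Gp x z y := by
  unfold Gp; linarith [dist_comm y z]

lemma btw_iff_gp {x y z : T} : Btw x y z ↔ Gp y x z = 0 := by
  unfold Btw Gp
  constructor <;> intro h <;> linarith [dist_comm y x]

lemma btw_symm {x y z : T} (h : Btw x y z) : Btw z y x := by
  unfold Btw at *
  linarith [dist_comm z y, dist_comm y x, dist_comm z x, dist_comm x y, dist_comm y z, dist_comm x z]

lemma Btw.self_left (x z : T) : Btw x x z := by simp [Btw]

lemma Btw.self_right (x z : T) : Btw x z z := by simp [Btw]

/-- The four point condition in Gromov product form. -/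
lemma four (hT : IsRTree T) (w x y z : T) :
    min (Gp w x z) (Gp w y z) ≤ Gp w x y := by
  have h := hT.2 x y w z
  rcases max_cases (dist x w + dist y z) (dist x z + dist y w) with ⟨he, _⟩ | ⟨he, _⟩ <;>
    rw [he] at h
  · refine min_le_iff.mpr (Or.inr ?_)
    unfold Gp
    linarith [dist_comm w x, dist_comm w y, dist_comm w z]
  · refine min_le_iff.mpr (Or.inl ?_)
    unfold Gp
    linarith [dist_comm w x, dist_comm w y, dist_comm w z]

/-- Gate lemma : if `b` is between `a` and `c`, and `d` branches at `b`
on the `c` side strictly, then `b` is between `a` and `d`. -/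
lemma gate (hT : IsRTree T) {a b c d : T} (h : Btw a b c) (hg : 0 < Gp b c d) :
    Btw a b d := by
  have h4 := four hT b a c d
  rw [btw_iff_gp] at h
  rw [btw_iff_gp]
  have h0 := Gp_nonneg b a d
  rcases min_le_iff.mp (h ▸ h4 : min (Gp b a d) (Gp b c d) ≤ 0) with h' | h'
  · linarith
  · linarith

/-- Chain lemma: taut chains concatenate. -/
lemma chain (hT : IsRTree T) {a b c d : T} (h1 : Btw a b c) (h2 : Btw b c d)
    (hbc : 0 < dist b c) : Btw a b d := by
  apply gate hT h1
  unfold Btw at h2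
  unfold Gp
  linarith

lemma btw_unique (hT : IsRTree T) {x y p q : T} (hp : Btw x p y) (hq : Btw x q y)
    (hd : dist x p = dist x q) : p = q := by
  have h := hT.2 p q x y
  unfold Btw at hp hq
  have : dist p q ≤ 0 := by
    rcases max_cases (dist p x + dist q y) (dist p y + dist q x) with ⟨he, _⟩ | ⟨he, _⟩ <;>
      rw [he] at h <;>
      linarith [dist_comm p x, dist_comm q x, dist_comm p y, dist_comm q y]
  exact dist_le_zero.mp this

lemma exists_btw (hT : IsRTree T) (x y : T) {t : ℝ} (h0 : 0 ≤ t) (h1 : t ≤ dist x y) :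
    ∃ p, Btw x p y ∧ dist x p = t := by
  obtain ⟨f, hf0, hf1, hf⟩ := hT.1 x y
  have e1 : dist x (f t) = t := by
    conv_lhs => rw [← hf0]
    rw [hf 0 ⟨le_refl 0, dist_nonneg⟩ t ⟨h0, h1⟩]
    rw [abs_of_nonpos (by linarith)]; ring
  refine ⟨f t, ?_, e1⟩
  have e2 : dist (f t) (f (dist x y)) = dist x y - t := by
    rw [hf t ⟨h0, h1⟩ (dist x y) ⟨dist_nonneg, le_refl _⟩]
    rw [abs_of_nonpos (by linarith)]; ring
  rw [hf1] at e2
  unfold Btw; rw [e1, e2]; ring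

/-- Medians exist. -/
lemma median (hT : IsRTree T) (x y z : T) :
    ∃ m, Btw x m y ∧ Btw x m z ∧ Btw y m z := by
  have h1 : Gp x y z / 2 ≤ dist x y := by
    have := dist_triangle x y z
    unfold Gp
    linarith
  have h0 : (0:ℝ) ≤ Gp x y z / 2 := by have := Gp_nonneg x y z; linarith
  obtain ⟨m, hm, hd⟩ := exists_btw hT x y h0 h1
  have hmy : dist m y = dist x y - Gp x y z / 2 := by
    unfold Btw at hm; rw [hd] at hm; linarith
  have h4 := four hT m x y z
  have hh : Gp m x y = 0 := btw_iff_gp.mp hm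
  rcases min_le_iff.mp (hh ▸ h4 : min (Gp m x z) (Gp m y z) ≤ 0) with h' | h'
  · have hxz : Btw x m z := btw_iff_gp.mpr (le_antisymm h' (Gp_nonneg _ _ _))
    refine ⟨m, hm, hxz, ?_⟩
    unfold Btw Gp at *
    linarith [dist_comm y m]
  · have hyz : Btw y m z := btw_iff_gp.mpr (le_antisymm h' (Gp_nonneg _ _ _))
    refine ⟨m, hm, ?_, hyz⟩
    unfold Btw Gp at *
    linarith [dist_comm y m]

/-- Key coordinate lemma: two points between `b` and `Z` are at distance
the difference of their coordinates. -/
lemma coord_dist (hT : IsRTree T) {b Z y z : T} (hy : Btw b y Z) (hz : Btw b z Z) :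
    dist y z = |dist b y - dist b z| := by
  have h := hT.2 y z b Z
  unfold Btw at hy hz
  have hub : dist y z ≤ |dist b y - dist b z| := by
    rcases max_cases (dist y b + dist z Z) (dist y Z + dist z b) with ⟨he, _⟩ | ⟨he, _⟩ <;>
      rw [he] at h <;>
      linarith [dist_comm y b, dist_comm z b,
        le_abs_self (dist b y - dist b z), neg_abs_le (dist b y - dist b z)]
  have hlb : |dist b y - dist b z| ≤ dist y z := by
    rw [abs_sub_le_iff]
    constructor
    · have := dist_triangle b z y; linarith [dist_comm z y]
    · have := dist_triangle b y z; linarith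
  linarith

lemma btw_map (g : T ≃ᵢ T) {x y z : T} (h : Btw x y z) : Btw (g x) (g y) (g z) := by
  unfold Btw at *; simpa [g.dist_eq] using h

end RTreeAux
namespace RTreeAux
section Stage2
variable {T : Type*} [MetricSpace T]

lemma iter_dist (g : T ≃ᵢ T) (n : ℕ) (x y : T) :
    dist ((⇑g)^[n] x) ((⇑g)^[n] y) = dist x y := by
  induction n with
  | zero => simp
  | succ n ih =>
    rw [Function.iterate_succ_apply' (⇑g) n x, Function.iterate_succ_apply' (⇑g) n y,
      g.dist_eq]
    exact ih

lemma iter_cancel (g : T ≃ᵢ T) (n : ℕ) (x : T) : (⇑g)^[n] ((⇑g.symm)^[n] x) = x := by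
  induction n with
  | zero => simp
  | succ n ih =>
    rw [Function.iterate_succ_apply' (⇑g.symm) n x, Function.iterate_succ_apply (⇑g) n _,
      g.apply_symm_apply]
    exact ih

lemma disp_symm (g : T ≃ᵢ T) (x : T) : dist (g.symm x) (g (g.symm x)) = dist x (g x) := by
  rw [g.apply_symm_apply]
  rw [← g.dist_eq (g.symm x) x, g.apply_symm_apply, dist_comm]

lemma disp_symm_iter (g : T ≃ᵢ T) (k : ℕ) (x : T) :
    dist ((⇑g.symm)^[k] x) (g ((⇑g.symm)^[k] x)) = dist x (g x) := by
  induction k with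
  | zero => simp
  | succ k ih =>
    rw [Function.iterate_succ_apply' (⇑g.symm) k x, disp_symm]
    exact ih

lemma transLen_le (g : T ≃ᵢ T) (x : T) : transLen g ≤ dist x (g x) :=
  ciInf_le ⟨0, by rintro _ ⟨y, rfl⟩; exact dist_nonneg⟩ x

lemma le_transLen [Nonempty T] {g : T ≃ᵢ T} {c : ℝ} (h : ∀ x, c ≤ dist x (g x)) :
    c ≤ transLen g := le_ciInf h

lemma transLen_symm (g : T ≃ᵢ T) : transLen g.symm = transLen g := by
  unfold transLen
  apply iInf_congr
  intro x
  rw [← g.dist_eq x (g.symm x), g.apply_symm_apply, dist_comm]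

lemma transLen_trans_comm (a b : T ≃ᵢ T) : transLen (a.trans b) = transLen (b.trans a) := by
  unfold transLen
  have h1 : (⨅ x : T, dist x (b (a x))) = ⨅ x : T, dist (a.symm x) (b (a (a.symm x))) :=
    (Function.Surjective.iInf_comp a.symm.surjective _).symm
  simp only [IsometryEquiv.trans_apply]
  rw [h1]
  apply iInf_congr
  intro x
  rw [IsometryEquiv.apply_symm_apply, ← a.dist_eq (a.symm x) (b x),
    IsometryEquiv.apply_symm_apply]

section Axis
variable (hT : IsRTree T) (g : T ≃ᵢ T) {l : ℝ}
  (hg : ∀ y, l ≤ dist y (g y)) (hl : 0 < l)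

include hT hg hl in
/-- Doubling along the axis. -/
lemma step1 {b : T} (hb : dist b (g b) = l) : dist b (g (g b)) = 2 * l := by
  have h0 : (0:ℝ) ≤ l / 2 := by linarith
  have h1 : l / 2 ≤ dist b (g b) := by rw [hb]; linarith
  obtain ⟨c, hc, hdc⟩ := exists_btw hT b (g b) h0 h1
  have hcb : dist c (g b) = l / 2 := by unfold Btw at hc; rw [hdc, hb] at hc; linarith
  have GA : Gp (g b) c b = l := by
    unfold Gp
    linarith [dist_comm (g b) c, dist_comm (g b) b, dist_comm c b, hcb, hdc, hb]
  have GB : Gp (g b) (g c) (g (g b)) = l := by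
    unfold Gp
    rw [g.dist_eq, g.dist_eq]
    linarith [hcb, hb, dist_comm (g b) (g c), g.dist_eq b c, hdc, dist_comm b c,
      g.dist_eq c (g b)]
  have hdisp : dist c (g c) = l - Gp (g b) c (g c) := by
    unfold Gp
    rw [g.dist_eq]
    linarith [dist_comm (g b) c, hcb, hdc, dist_comm b c]
  have hle : Gp (g b) c (g c) ≤ 0 := by
    have := hg c
    linarith
  have h4b := four hT (g b) c (g c) (g (g b))
  have h4a := four hT (g b) c (g (g b)) b
  have hce : Gp (g b) c (g (g b)) ≤ 0 := by
    rcases min_le_iff.mp (le_trans h4b hle) with h' | h'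
    · exact h'
    · rw [GB] at h'; linarith
  have heb : Gp (g b) (g (g b)) b ≤ 0 := by
    rcases min_le_iff.mp (le_trans h4a hce) with h' | h'
    · rw [GA] at h'; linarith
    · exact h'
  have htri : dist b (g (g b)) ≤ 2 * l := by
    have := dist_triangle b (g b) (g (g b))
    rw [hb, g.dist_eq, hb] at this; linarith
  unfold Gp at heb
  rw [g.dist_eq, hb] at heb
  linarith [dist_comm (g b) b, dist_comm (g (g b)) b]

include hT hg hl in
lemma pow_dist {b : T} (hb : dist b (g b) = l) (n : ℕ) :
    dist b ((⇑g)^[n] b) = n * l := by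
  suffices H : ∀ n : ℕ, dist b ((⇑g)^[n] b) = n * l ∧
      dist b ((⇑g)^[n+1] b) = (n+1) * l from (H n).1
  intro n
  induction n with
  | zero => constructor <;> simp [hb]
  | succ n ih =>
    obtain ⟨ih0, ih1⟩ := ih
    refine ⟨by push_cast; push_cast at ih1; linarith, ?_⟩
    set e : ℕ → T := fun k => (⇑g)^[k] b with he
    have hshift : ∀ k : ℕ, dist (e k) (e (k+1)) = l := by
      intro k
      show dist ((⇑g)^[k] b) ((⇑g)^[k+1] b) = l
      rw [Function.iterate_succ_apply (⇑g) k b]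
      calc dist ((⇑g)^[k] b) ((⇑g)^[k] (g b)) = dist b (g b) := iter_dist g k b (g b)
        _ = l := hb
    have hen : dist (e n) (g (e n)) = l := by
      have := hshift n
      rw [show e (n+1) = g (e n) from Function.iterate_succ_apply' (⇑g) n b] at this
      exact this
    have hs := step1 hT g hg hl hen
    have he2 : g (g (e n)) = e (n+2) := by
      show g (g ((⇑g)^[n] b)) = (⇑g)^[n+2] b
      rw [Function.iterate_succ_apply' (⇑g) (n+1) b, Function.iterate_succ_apply' (⇑g) n b]
    rw [he2] at hs
    have hbtw : Btw (e (n+2)) (e (n+1)) (e n) := by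
      unfold Btw
      rw [dist_comm (e (n+2)) (e (n+1)), dist_comm (e (n+1)) (e n), dist_comm (e (n+2)) (e n)]
      rw [hshift n, hshift (n+1), hs]
      ring
    have hgate : Btw (e (n+2)) (e (n+1)) b := by
      apply gate hT hbtw
      unfold Gp
      have c1 : dist (e (n+1)) (e n) = l := by rw [dist_comm]; exact hshift n
      have c2 : dist (e (n+1)) b = (n+1) * l := by rw [dist_comm]; exact ih1
      have c3 : dist (e n) b = n * l := by rw [dist_comm]; exact ih0
      rw [c1, c2, c3]; push_cast; linarith
    unfold Btw at hgate
    rw [dist_comm (e (n+2)) (e (n+1)), hshift (n+1), dist_comm (e (n+1)) b, ih1,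
      dist_comm (e (n+2)) b] at hgate
    show dist b (e (n+2)) = _
    push_cast
    push_cast at hgate
    linarith

lemma symm_disp (y : T) : dist y (g.symm y) = dist y (g y) := by
  have h := g.dist_eq y (g.symm y)
  rw [g.apply_symm_apply] at h
  rw [← h, dist_comm]

end Axis
end Stage2
end RTreeAux
namespace RTreeAux
section Stage3
variable {T : Type*} [MetricSpace T]

/-- concatenation of betweenness (metric fact). -/
lemma btw_concat {a c E z : T} (h1 : Btw a c E) (h2 : Btw c z E) : Btw a z E := by
  unfold Btw at *
  have t1 : dist a z ≤ dist a c + dist c z := dist_triangle a c z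
  have t2 : dist a E ≤ dist a z + dist z E := dist_triangle a z E
  linarith

lemma btw_concat_right {a c E z : T} (h1 : Btw a z c) (h2 : Btw a c E) : Btw a z E := by
  unfold Btw at *
  have t1 : dist z E ≤ dist z c + dist c E := dist_triangle z c E
  have t2 : dist a E ≤ dist a z + dist z E := dist_triangle a z E
  linarith

/-- The `k`-th point of the axis orbit of `b` under `g`. -/
def pt (g : T ≃ᵢ T) (b : T) : ℤ → T
  | (n : ℕ) => (⇑g)^[n] b
  | Int.negSucc n => (⇑g.symm)^[n+1] b

@[simp] lemma pt_zero (g : T ≃ᵢ T) (b : T) : pt g b 0 = b := rfl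

lemma pt_shift (g : T ≃ᵢ T) (b : T) (k : ℤ) : g (pt g b k) = pt g b (k+1) := by
  rcases k with n | n
  · show g (pt g b (n:ℤ)) = pt g b ((n:ℤ)+1)
    have h : ((n : ℤ) + 1) = ((n + 1 : ℕ) : ℤ) := by push_cast; ring
    rw [h]
    show g ((⇑g)^[n] b) = (⇑g)^[n+1] b
    exact (Function.iterate_succ_apply' (⇑g) n b).symm
  · rcases n with _ | n
    · have h : (Int.negSucc 0 + 1) = ((0:ℕ) : ℤ) := by decide
      rw [h]
      show g ((⇑g.symm)^[0+1] b) = (⇑g)^[0] b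
      simp
    · have h : (Int.negSucc (n+1) + 1) = Int.negSucc n := by
        rw [Int.negSucc_eq, Int.negSucc_eq]
        push_cast
        ring
      rw [h]
      show g ((⇑g.symm)^[n+1+1] b) = (⇑g.symm)^[n+1] b
      rw [Function.iterate_succ_apply' (⇑g.symm) (n+1) b, g.apply_symm_apply]

lemma pt_shift_symm (g : T ≃ᵢ T) (b : T) (k : ℤ) : g.symm (pt g b k) = pt g b (k-1) := by
  have := pt_shift g b (k-1)
  rw [sub_add_cancel] at this
  rw [← this, g.symm_apply_apply]

lemma pt_iter (g : T ≃ᵢ T) (b : T) (n : ℕ) (k : ℤ) :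
    (⇑g)^[n] (pt g b k) = pt g b (k + n) := by
  induction n generalizing k with
  | zero => simp
  | succ n ih =>
    rw [Function.iterate_succ_apply (⇑g) n (pt g b k), pt_shift, ih (k+1)]
    congr 1
    push_cast
    ring

lemma pt_axis (g : T ≃ᵢ T) {l : ℝ} {b : T} (hb : dist b (g b) = l) (k : ℤ) :
    dist (pt g b k) (g (pt g b k)) = l := by
  rcases k with n | n
  · show dist ((⇑g)^[n] b) (g ((⇑g)^[n] b)) = l
    rw [show g ((⇑g)^[n] b) = (⇑g)^[n] (g b) from by
      rw [← Function.iterate_succ_apply' (⇑g) n b, Function.iterate_succ_apply (⇑g) n b]]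
    rw [iter_dist]
    exact hb
  · show dist ((⇑g.symm)^[n+1] b) (g ((⇑g.symm)^[n+1] b)) = l
    rw [disp_symm_iter]
    exact hb

section WithHyp
variable (hT : IsRTree T) (g : T ≃ᵢ T) {l : ℝ}
  (hg : ∀ y, l ≤ dist y (g y)) (hl : 0 < l) {b : T} (hb : dist b (g b) = l)

include hT hg hl hb in
lemma pt_dist (i j : ℤ) :
    dist (pt g b i) (pt g b j) = |(i:ℝ) - j| * l := by
  have key : ∀ i j : ℤ, i ≤ j → dist (pt g b i) (pt g b j) = ((j:ℝ) - i) * l := by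
    intro i j hij
    have hn : (j - i).toNat = j - i := Int.toNat_of_nonneg (by omega)
    have hpt : pt g b j = (⇑g)^[(j-i).toNat] (pt g b i) := by
      rw [pt_iter g b ((j-i).toNat) i]
      congr 1
      omega
    rw [hpt, pow_dist hT g hg hl (pt_axis g hb i) ((j-i).toNat)]
    have hcast : (((j-i).toNat : ℕ) : ℝ) = (j:ℝ) - i := by
      have h' := congrArg (fun t : ℤ => (t : ℝ)) hn
      push_cast at h'
      linarith
    rw [hcast]
  rcases le_total i j with h | h
  · have hc : (i:ℝ) ≤ (j:ℝ) := by exact_mod_cast h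
    rw [key i j h, abs_of_nonpos (by linarith)]
    try ring
  · have hc : (j:ℝ) ≤ (i:ℝ) := by exact_mod_cast h
    rw [dist_comm, key j i h, abs_of_nonneg (by linarith)]
    try ring

include hT hg hl hb in
lemma pt_btw {i x j : ℤ} (h1 : i ≤ x) (h2 : x ≤ j) :
    Btw (pt g b i) (pt g b x) (pt g b j) := by
  unfold Btw
  rw [pt_dist hT g hg hl hb i x, pt_dist hT g hg hl hb x j, pt_dist hT g hg hl hb i j]
  have c1 : (i:ℝ) ≤ (x:ℝ) := by exact_mod_cast h1
  have c2 : (x:ℝ) ≤ (j:ℝ) := by exact_mod_cast h2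
  have e1 : |(i:ℝ) - x| = (x:ℝ) - i := by rw [abs_of_nonpos (by linarith)]; ring
  have e2 : |(x:ℝ) - j| = (j:ℝ) - x := by rw [abs_of_nonpos (by linarith)]; ring
  have e3 : |(i:ℝ) - j| = (j:ℝ) - i := by rw [abs_of_nonpos (by linarith)]; ring
  rw [e1, e2, e3]; ring

end WithHyp

/-- A point lies on the (extended) axis line through `b`. -/
def OnLine (g : T ≃ᵢ T) (b z : T) : Prop :=
  ∃ i j : ℤ, i ≤ j ∧ Btw (pt g b i) z (pt g b j)

lemma onLine_pt (g : T ≃ᵢ T) (b : T) (k : ℤ) : OnLine g b (pt g b k) :=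
  ⟨k, k, le_refl _, by unfold Btw; simp⟩

lemma onLine_map (g : T ≃ᵢ T) {b z : T} (h : OnLine g b z) : OnLine g b (g z) := by
  obtain ⟨i, j, hij, hB⟩ := h
  exact ⟨i+1, j+1, by omega, by
    have := btw_map g hB
    rwa [pt_shift, pt_shift] at this⟩

lemma onLine_symm_map (g : T ≃ᵢ T) {b z : T} (h : OnLine g b z) : OnLine g b (g.symm z) := by
  obtain ⟨i, j, hij, hB⟩ := h
  exact ⟨i-1, j-1, by omega, by
    have := btw_map g.symm hB
    rwa [pt_shift_symm, pt_shift_symm] at this⟩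

section WithHyp2
variable (hT : IsRTree T) (g : T ≃ᵢ T) {l : ℝ}
  (hg : ∀ y, l ≤ dist y (g y)) (hl : 0 < l) {b : T} (hb : dist b (g b) = l)

include hT hg hl hb in
lemma onLine_widen {z : T} {i j I J : ℤ} (hI : I ≤ i) (hJ : j ≤ J) (hij : i ≤ j)
    (h : Btw (pt g b i) z (pt g b j)) : Btw (pt g b I) z (pt g b J) := by
  have h1 : Btw (pt g b i) (pt g b j) (pt g b J) := pt_btw hT g hg hl hb hij hJ
  have h2 : Btw (pt g b i) z (pt g b J) := btw_concat_right h h1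
  have h3 : Btw (pt g b I) (pt g b i) (pt g b J) := pt_btw hT g hg hl hb hI (le_trans hij hJ)
  exact btw_concat h3 h2

include hT hg hl hb in
/-- Every point of the extended line is on the axis. -/
lemma onLine_axis {z : T} (h : OnLine g b z) : dist z (g z) = l := by
  obtain ⟨i, j, hij, hB⟩ := h
  have hBg : Btw (pt g b (i+1)) (g z) (pt g b (j+1)) := by
    have := btw_map g hB
    rwa [pt_shift, pt_shift] at this
  have e1 : dist (pt g b (i+1)) (g z) = dist (pt g b i) z := by
    rw [← pt_shift, g.dist_eq]
  have e2 : dist (g z) (pt g b (j+1)) = dist z (pt g b j) := by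
    rw [← pt_shift g b j, ← g.dist_eq z (pt g b j)]
  have d1 : dist (pt g b i) (pt g b (i+1)) = l := by
    rw [pt_dist hT g hg hl hb]; push_cast; rw [show ((i:ℝ) - (i+1)) = -1 from by ring]; simp
  have d2 : dist (pt g b i) (pt g b (j+1)) = ((j:ℝ) + 1 - i) * l := by
    rw [pt_dist hT g hg hl hb]
    rw [abs_of_nonpos (by
      have : (i:ℝ) ≤ ((j+1 : ℤ) : ℝ) := by exact_mod_cast (by omega : i ≤ j + 1)
      push_cast at this ⊢; linarith)]
    push_cast; ring
  have d3 : dist (pt g b i) (pt g b j) = ((j:ℝ) - i) * l := by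
    rw [pt_dist hT g hg hl hb]
    rw [abs_of_nonpos (by
      have : (i:ℝ) ≤ (j:ℝ) := by exact_mod_cast hij
      linarith)]
    push_cast; ring
  have hsum : dist (pt g b i) z + dist z (pt g b j) = ((j:ℝ) - i) * l := by
    have h' := hB
    unfold Btw at h'
    rw [d3] at h'
    exact h'
  have tri1 : dist (pt g b i) (g z) ≤ l + dist (pt g b i) z := by
    calc dist (pt g b i) (g z) ≤ dist (pt g b i) (pt g b (i+1)) + dist (pt g b (i+1)) (g z) :=
          dist_triangle _ _ _
      _ = l + dist (pt g b i) z := by rw [d1, e1]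
  have tri2 : ((j:ℝ) + 1 - i) * l ≤ dist (pt g b i) (g z) + dist z (pt g b j) := by
    have h' := dist_triangle (pt g b i) (g z) (pt g b (j+1))
    rw [e2, d2] at h'
    exact h'
  have hgz : dist (pt g b i) (g z) = l + dist (pt g b i) z := by linarith
  have hBgz : Btw (pt g b i) (g z) (pt g b (j+1)) := by
    unfold Btw
    rw [hgz, e2, d2]
    linarith
  have hBz : Btw (pt g b i) z (pt g b (j+1)) :=
    onLine_widen hT g hg hl hb (le_refl i) (by omega) hij hB
  have hfin := coord_dist hT hBz hBgz
  rw [hgz] at hfin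
  rw [hfin]
  rw [show dist (pt g b i) z - (l + dist (pt g b i) z) = -l from by ring]
  simp [abs_of_nonneg (le_of_lt hl)]

end WithHyp2
end Stage3
end RTreeAux
namespace RTreeAux
section Stage4
variable {T : Type*} [MetricSpace T]

/-- Displacement lower bound: if `m` lies on a local axis of `g`
then every point is displaced at least as much as `m`. -/
lemma lemL (hT : IsRTree T) (g : T ≃ᵢ T) (m : T)
    (hB : Btw m (g m) (g (g m))) (y : T) : dist m (g m) ≤ dist y (g y) := by
  rcases eq_or_lt_of_le (dist_nonneg : (0:ℝ) ≤ dist m (g m)) with h0 | h0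
  · rw [← h0]; exact dist_nonneg
  have hgm2 : dist (g m) (g (g m)) = dist m (g m) := g.dist_eq m (g m)
  have hm2 : dist m (g (g m)) = 2 * dist m (g m) := by
    unfold Btw at hB; rw [hgm2] at hB; linarith
  obtain ⟨c, hc1, hc2, hc3⟩ := median hT m (g (g m)) y
  -- hc1 : Btw m c g²m, hc2 : Btw m c y, hc3 : Btw g²m c y
  set lam := dist m (g m) with hlam
  have hcE : dist c (g (g m)) = 2 * lam - dist m c := by
    unfold Btw at hc1; rw [hm2] at hc1; linarith
  rcases le_total (dist m c) lam with hcase | hcase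
  · -- c in [m, gm]
    have hgmIn : Btw m (g m) (g (g m)) := hB
    have hcgm : dist c (g m) = lam - dist m c := by
      have := coord_dist hT hc1 hgmIn
      rw [this, abs_of_nonpos (by linarith)]; ring
    have hmcgm : Btw m c (g m) := by
      unfold Btw; rw [hcgm]; linarith
    have hmap : Btw (g m) (g c) (g (g m)) := btw_map g hmcgm
    have egc1 : dist (g m) (g c) = dist m c := g.dist_eq m c
    have egc2 : dist (g c) (g (g m)) = lam - dist m c := by
      rw [g.dist_eq c (g m)]; exact hcgm
    have hmgc : dist m (g c) = lam + dist m c := by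
      have tri1 : dist m (g c) ≤ lam + dist m c := by
        calc dist m (g c) ≤ dist m (g m) + dist (g m) (g c) := dist_triangle _ _ _
          _ = lam + dist m c := by rw [egc1]
      have tri2 : dist m (g (g m)) ≤ dist m (g c) + dist (g c) (g (g m)) := dist_triangle _ _ _
      rw [hm2, egc2] at tri2
      linarith
    have hBgc : Btw m (g c) (g (g m)) := by
      unfold Btw; rw [hmgc, egc2, hm2]; ring
    have hdcgc : dist c (g c) = lam := by
      have := coord_dist hT hc1 hBgc
      rw [this, hmgc, abs_of_nonpos (by linarith)]; ring
    have hyc : Btw y c (g (g m)) := btw_symm hc3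
    have hgate : Btw y c (g c) := by
      apply gate hT hyc
      unfold Gp
      rw [hcE, hdcgc]
      have h' : dist (g (g m)) (g c) = lam - dist m c := by
        rw [dist_comm]; exact egc2
      linarith
    have hygc : dist y (g c) = dist y c + lam := by
      unfold Btw at hgate; rw [hdcgc] at hgate; linarith
    have hgygc : dist (g y) (g c) = dist y c := g.dist_eq y c
    have tri : dist y (g c) ≤ dist y (g y) + dist (g y) (g c) := dist_triangle _ _ _
    rw [hgygc, hygc] at tri
    linarith
  · -- c in [gm, g²m]
    have hgmc : dist (g m) c = dist m c - lam := by
      have := coord_dist hT hB hc1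
      rw [this, abs_of_nonpos (by linarith)]; ring
    have hgmcE : Btw (g m) c (g (g m)) := by
      unfold Btw; rw [hgmc, hcE, hgm2]; linarith
    have hmap : Btw m (g.symm c) (g m) := by
      have := btw_map g.symm hgmcE
      rwa [g.symm_apply_apply, g.symm_apply_apply] at this
    have egc1 : dist m (g.symm c) = dist m c - lam := by
      have h' : dist m (g.symm c) = dist (g m) c := by
        rw [← g.dist_eq m (g.symm c), g.apply_symm_apply]
      rw [h', hgmc]
    have egc2 : dist (g.symm c) (g m) = 2 * lam - dist m c := by
      have h' := g.dist_eq (g.symm c) (g m)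
      rw [g.apply_symm_apply] at h'
      rw [← h', hcE]
    have hmscE : Btw m (g.symm c) (g (g m)) := by
      have tri1 : dist (g.symm c) (g (g m)) ≤ (2 * lam - dist m c) + lam := by
        calc dist (g.symm c) (g (g m)) ≤ dist (g.symm c) (g m) + dist (g m) (g (g m)) :=
              dist_triangle _ _ _
          _ = (2 * lam - dist m c) + lam := by rw [egc2, hgm2]
      have tri2 : dist m (g (g m)) ≤ dist m (g.symm c) + dist (g.symm c) (g (g m)) :=
        dist_triangle _ _ _
      rw [hm2, egc1] at tri2
      unfold Btw
      rw [egc1, hm2]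
      linarith
    have hdcgc : dist c (g.symm c) = lam := by
      have h' := coord_dist hT hc1 hmscE
      rw [egc1] at h'
      rw [h', abs_of_nonneg (by linarith)]; ring
    have hyc2 : Btw y c m := btw_symm hc2
    have hgate : Btw y c (g.symm c) := by
      apply gate hT hyc2
      unfold Gp
      rw [hdcgc, egc1]
      have h' : dist c m = dist m c := dist_comm c m
      linarith
    have hygc : dist y (g.symm c) = dist y c + lam := by
      unfold Btw at hgate; rw [hdcgc] at hgate; linarith
    have htrans : dist (g y) c = dist y (g.symm c) := by
      rw [← g.dist_eq y (g.symm c), g.apply_symm_apply]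
    have tri : dist (g y) c ≤ dist (g y) y + dist y c := dist_triangle _ _ _
    rw [htrans, hygc] at tri
    have h' : dist (g y) y = dist y (g y) := dist_comm _ _
    linarith

end Stage4
end RTreeAux
namespace RTreeAux
section Stage5
variable {T : Type*} [MetricSpace T]
variable (hT : IsRTree T) (g : T ≃ᵢ T) {l : ℝ}
  (hg : ∀ y, l ≤ dist y (g y)) (hl : 0 < l)

include hT hg hl in
/-- Projection to the axis line: the (unique) gate of `x` on the line through `p`. -/
lemma proj {p : T} (hp : dist p (g p) = l) (x : T) (N : ℕ)
    (hN : dist p x + l ≤ N * l) :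
    ∃ m : T, dist x (g x) = l + 2 * dist x m ∧ dist m (g m) = l ∧
      OnLine g p m ∧
      ∀ z, OnLine g p z → dist x z = dist x m + dist m z := by
  have D := pt_dist hT g hg hl hp
  have hd0 : (0:ℝ) ≤ dist p x := dist_nonneg
  -- notation
  obtain ⟨m, h1, h2, h3⟩ := median hT (pt g p (-(N:ℤ))) x (pt g p (N:ℤ))
  -- h1 : Btw B0 m x ; h2 : Btw B0 m E0 ; h3 : Btw x m E0
  set t := dist (pt g p (-(N:ℤ))) m with ht
  set u := dist x m with hu
  have hu0 : (0:ℝ) ≤ u := dist_nonneg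
  have dBE : dist (pt g p (-(N:ℤ))) (pt g p (N:ℤ)) = 2 * N * l := by
    rw [D, abs_of_nonpos (by push_cast; linarith [Nat.cast_nonneg (α := ℝ) N])]
    push_cast; ring
  have dBp : dist (pt g p (-(N:ℤ))) p = N * l := by
    have h' := D (-(N:ℤ)) 0
    rw [pt_zero] at h'
    rw [h', abs_of_nonpos (by push_cast; linarith [Nat.cast_nonneg (α := ℝ) N])]
    push_cast; ring
  have dpE : dist p (pt g p (N:ℤ)) = N * l := by
    have h' := D 0 (N:ℤ)
    rw [pt_zero] at h'
    rw [h', abs_of_nonpos (by push_cast; linarith [Nat.cast_nonneg (α := ℝ) N])]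
    push_cast; ring
  have dBx : dist (pt g p (-(N:ℤ))) x = t + u := by
    unfold Btw at h1; rw [dist_comm m x] at h1; rw [← h1]
  have dmE : dist m (pt g p (N:ℤ)) = 2 * N * l - t := by
    unfold Btw at h2; rw [dBE] at h2; linarith
  have dxE : dist x (pt g p (N:ℤ)) = u + (2 * N * l - t) := by
    unfold Btw at h3; rw [← dmE]; rw [hu] at *; linarith [h3]
  -- margin bounds
  have hub : dist x (pt g p (N:ℤ)) ≤ dist p x + N * l := by
    calc dist x (pt g p (N:ℤ)) ≤ dist x p + dist p (pt g p (N:ℤ)) := dist_triangle _ _ _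
      _ = dist p x + N * l := by rw [dist_comm x p, dpE]
  have hlb : dist (pt g p (-(N:ℤ))) x ≤ N * l + dist p x := by
    calc dist (pt g p (-(N:ℤ))) x ≤ dist (pt g p (-(N:ℤ))) p + dist p x := dist_triangle _ _ _
      _ = N * l + dist p x := by rw [dBp]
  have htl : l + u ≤ t := by rw [dxE] at hub; linarith
  have htu : t + u ≤ 2 * N * l - l := by rw [dBx] at hlb; linarith
  -- the translate g m
  have hBg : Btw (pt g p (-(N:ℤ)+1)) (g m) (pt g p ((N:ℤ)+1)) := by
    have h' := btw_map g h2
    rwa [pt_shift, pt_shift] at h'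
  have egm1 : dist (pt g p (-(N:ℤ)+1)) (g m) = t := by
    rw [← pt_shift, g.dist_eq]
  have egm2 : dist (g m) (pt g p ((N:ℤ)+1)) = 2 * N * l - t := by
    rw [← pt_shift g p (N:ℤ), g.dist_eq]
    exact dmE
  have dB1 : dist (pt g p (-(N:ℤ))) (pt g p (-(N:ℤ)+1)) = l := by
    rw [D, show ((-(N:ℤ) : ℤ):ℝ) - ((-(N:ℤ)+1 : ℤ):ℝ) = -1 by push_cast; ring]
    simp
  have dBE1 : dist (pt g p (-(N:ℤ))) (pt g p ((N:ℤ)+1)) = 2 * N * l + l := by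
    rw [D, abs_of_nonpos (by push_cast; linarith [Nat.cast_nonneg (α := ℝ) N])]
    push_cast; ring
  have dEE1 : dist (pt g p (N:ℤ)) (pt g p ((N:ℤ)+1)) = l := by
    rw [D, show (((N:ℤ) : ℤ):ℝ) - (((N:ℤ)+1 : ℤ):ℝ) = -1 by push_cast; ring]
    simp
  have dB0gm : dist (pt g p (-(N:ℤ))) (g m) = t + l := by
    have tri1 : dist (pt g p (-(N:ℤ))) (g m) ≤ l + t := by
      calc dist (pt g p (-(N:ℤ))) (g m)
          ≤ dist (pt g p (-(N:ℤ))) (pt g p (-(N:ℤ)+1)) + dist (pt g p (-(N:ℤ)+1)) (g m) :=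
            dist_triangle _ _ _
        _ = l + t := by rw [dB1, egm1]
    have tri2 : dist (pt g p (-(N:ℤ))) (pt g p ((N:ℤ)+1)) ≤
        dist (pt g p (-(N:ℤ))) (g m) + dist (g m) (pt g p ((N:ℤ)+1)) := dist_triangle _ _ _
    rw [dBE1, egm2] at tri2
    linarith
  have hBgm : Btw (pt g p (-(N:ℤ))) (g m) (pt g p ((N:ℤ)+1)) := by
    unfold Btw; rw [dB0gm, egm2, dBE1]; ring
  have hBm' : Btw (pt g p (-(N:ℤ))) m (pt g p ((N:ℤ)+1)) :=
    onLine_widen hT g hg hl hp (le_refl _) (by omega) (by omega) h2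
  have dmgm : dist m (g m) = l := by
    have h' := coord_dist hT hBm' hBgm
    rw [← ht, dB0gm] at h'
    rw [h', abs_of_nonpos (by linarith)]; ring
  -- m is the gate of x
  have dmE1 : dist m (pt g p ((N:ℤ)+1)) = 2 * N * l - t + l := by
    have h' := coord_dist hT hBm' (Btw.self_right _ _)
    rw [← ht, dBE1] at h'
    rw [h', abs_of_nonpos (by linarith)]; ring
  have hmEE1 : Btw m (pt g p (N:ℤ)) (pt g p ((N:ℤ)+1)) := by
    unfold Btw; rw [dmE, dEE1, dmE1]
  have hxmE' : Btw x m (pt g p ((N:ℤ)+1)) := by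
    apply chain hT h3 hmEE1
    rw [dmE]; linarith
  have hxmgm : Btw x m (g m) := by
    apply gate hT hxmE'
    unfold Gp
    rw [dmE1, dmgm, dist_comm (pt g p ((N:ℤ)+1)) (g m), egm2]
    linarith
  have dxgm : dist x (g m) = u + l := by
    unfold Btw at hxmgm; rw [← hu, dmgm] at hxmgm; linarith
  -- the other side
  have hgmB1B : Btw (g m) (pt g p (-(N:ℤ)+1)) (pt g p (-(N:ℤ))) := by
    unfold Btw
    rw [dist_comm (g m) (pt g p (-(N:ℤ)+1)), egm1, dist_comm (pt g p (-(N:ℤ)+1)) (pt g p (-(N:ℤ))),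
      dB1, dist_comm (g m) (pt g p (-(N:ℤ))), dB0gm]
  have hgxmB : Btw (g x) (g m) (pt g p (-(N:ℤ))) := by
    have h' := btw_map g (btw_symm h1)
    rw [pt_shift] at h'
    apply chain hT h' hgmB1B
    rw [dist_comm (g m) (pt g p (-(N:ℤ)+1)), egm1]
    linarith
  have hfin : Btw (g x) (g m) x := by
    apply gate hT hgxmB
    unfold Gp
    rw [dist_comm (g m) (pt g p (-(N:ℤ))), dB0gm, dist_comm (g m) x, dxgm, dBx]
    linarith
  have concl1 : dist x (g x) = l + 2 * u := by
    unfold Btw at hfin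
    rw [g.dist_eq x m, ← hu, dist_comm (g m) x, dxgm, dist_comm (g x) x] at hfin
    linarith
  refine ⟨m, concl1, dmgm, ⟨-(N:ℤ), (N:ℤ), by omega, h2⟩, ?_⟩
  -- the gate property
  rintro z ⟨i, j, hij, hBz⟩
  rcases eq_or_ne z m with rfl | hzm
  · simp
  set I := min i (-(N:ℤ)) with hI
  set J := max j ((N:ℤ)+1) with hJ
  have hIN : I ≤ -(N:ℤ) := min_le_right _ _
  have hNJ : (N:ℤ) ≤ J := le_trans (by omega) (le_max_right j ((N:ℤ)+1))
  have hzIJ : Btw (pt g p I) z (pt g p J) :=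
    onLine_widen hT g hg hl hp (min_le_left _ _) (le_max_left _ _) hij hBz
  have hmIJ : Btw (pt g p I) m (pt g p J) :=
    onLine_widen hT g hg hl hp hIN hNJ (by omega) h2
  have hIr : (I:ℝ) ≤ -(N:ℝ) := by exact_mod_cast hIN
  have hNr : (N:ℝ) ≤ (J:ℝ) := by exact_mod_cast hNJ
  have dIB : dist (pt g p I) (pt g p (-(N:ℤ))) = (-(N:ℝ) - I) * l := by
    rw [D, abs_of_nonpos (by push_cast; linarith)]
    push_cast; ring
  have dIE : dist (pt g p I) (pt g p (N:ℤ)) = ((N:ℝ) - I) * l := by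
    rw [D, abs_of_nonpos (by push_cast; linarith)]
    push_cast; ring
  have dIJ : dist (pt g p I) (pt g p J) = ((J:ℝ) - I) * l := by
    rw [D, abs_of_nonpos (by push_cast; linarith)]
    push_cast; ring
  have dEJ : dist (pt g p (N:ℤ)) (pt g p J) = ((J:ℝ) - N) * l := by
    rw [D, abs_of_nonpos (by push_cast; linarith)]
    push_cast; ring
  have dBJ : dist (pt g p (-(N:ℤ))) (pt g p J) = ((J:ℝ) + N) * l := by
    rw [D, abs_of_nonpos (by push_cast; linarith)]
    push_cast; ring
  set cm := dist (pt g p I) m with hcm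
  set cz := dist (pt g p I) z with hcz
  have hcmval : cm = (-(N:ℝ) - I) * l + t := by
    have tri1 : dist (pt g p I) m ≤ (-(N:ℝ) - I) * l + t := by
      calc dist (pt g p I) m ≤ dist (pt g p I) (pt g p (-(N:ℤ))) + dist (pt g p (-(N:ℤ))) m :=
            dist_triangle _ _ _
        _ = (-(N:ℝ) - I) * l + t := by rw [dIB, ← ht]
    have tri2 : dist (pt g p I) (pt g p (N:ℤ)) ≤ dist (pt g p I) m + dist m (pt g p (N:ℤ)) :=
      dist_triangle _ _ _
    rw [dIE, dmE] at tri2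
    rw [← hcm] at tri1 tri2
    linarith
  have dmz : dist m z = |cm - cz| := by
    have h' := coord_dist hT hmIJ hzIJ
    rw [← hcm, ← hcz] at h'
    exact h'
  have dmJ : dist m (pt g p J) = ((J:ℝ) - I) * l - cm := by
    unfold Btw at hmIJ
    rw [← hcm, dIJ] at hmIJ
    linarith
  have dzJ : dist z (pt g p J) = ((J:ℝ) - I) * l - cz := by
    unfold Btw at hzIJ
    rw [← hcz, dIJ] at hzIJ
    linarith
  rcases lt_trichotomy cz cm with hccase | hccase | hccase
  · -- z on the B side of m
    have hmBI : Btw m (pt g p (-(N:ℤ))) (pt g p I) := by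
      unfold Btw
      rw [dist_comm m (pt g p (-(N:ℤ))), ← ht, dist_comm (pt g p (-(N:ℤ))) (pt g p I), dIB,
        dist_comm m (pt g p I), ← hcm, hcmval]
      ring
    have hxmI : Btw x m (pt g p I) := by
      apply chain hT (btw_symm h1) hmBI
      rw [dist_comm m (pt g p (-(N:ℤ))), ← ht]
      linarith
    have hgz : Btw x m z := by
      apply gate hT hxmI
      unfold Gp
      have e1 : dist m (pt g p I) = cm := by rw [dist_comm, hcm]
      have e2 : dist (pt g p I) z = cz := by rw [hcz]
      have e3 : |cm - cz| = cm - cz := abs_of_nonneg (by linarith)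
      rw [e3] at dmz
      linarith [e1, e2, dmz]
    unfold Btw at hgz
    rw [← hu] at hgz
    linarith [hgz]
  · -- z = m
    exact absurd (by
      have : dist m z = 0 := by rw [dmz, hccase]; simp
      exact dist_eq_zero.mp (by rw [dist_comm]; exact this)) hzm
  · -- z on the E side of m
    have hmEJ : Btw m (pt g p (N:ℤ)) (pt g p J) := by
      unfold Btw
      rw [dmE, dEJ, dmJ, hcmval]
      push_cast; ring
    have hxmJ : Btw x m (pt g p J) := by
      apply chain hT h3 hmEJ
      rw [dmE]; linarith
    have hgz : Btw x m z := by
      apply gate hT hxmJ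
      unfold Gp
      have e2 : dist (pt g p J) z = (↑J - ↑I) * l - cz := by rw [dist_comm, dzJ]
      have e3 : |cm - cz| = -(cm - cz) := abs_of_nonpos (by linarith)
      rw [e3] at dmz
      linarith [dmJ, e2, dmz]
    unfold Btw at hgz
    rw [← hu] at hgz
    linarith [hgz]

end Stage5
end RTreeAux
namespace RTreeAux
section Stage6
variable {T : Type*} [MetricSpace T]

lemma exists_N {l d : ℝ} (hl : 0 < l) : ∃ N : ℕ, d + l ≤ N * l := by
  obtain ⟨N, hN⟩ := exists_nat_ge ((d + l) / l)
  exact ⟨N, by rw [div_le_iff₀ hl] at hN; linarith⟩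

lemma onLine_self (g : T ≃ᵢ T) (b : T) : OnLine g b b := by
  simpa using onLine_pt g b 0

lemma exist_meet [Nonempty T] (hT : IsRTree T) (γ δ : T ≃ᵢ T)
    (hγ : IsHyperbolicIso γ) (hδ : IsHyperbolicIso δ)
    (h1 : transLen (δ.trans γ) = transLen γ + transLen δ) :
    ∃ p : T, p ∈ axisSet γ ∩ axisSet δ := by
  obtain ⟨hlγ, aγ, haγ⟩ := hγ
  obtain ⟨hlδ, bδ, hbδ⟩ := hδ
  have haγ' : dist aγ (γ aγ) = transLen γ := haγ
  have hbδ' : dist bδ (δ bδ) = transLen δ := hbδ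
  have hgγ : ∀ y, transLen γ ≤ dist y (γ y) := fun y => transLen_le γ y
  have hgδ : ∀ y, transLen δ ≤ dist y (δ y) := fun y => transLen_le δ y
  obtain ⟨N₁, hN₁⟩ := exists_N (l := transLen δ) (d := dist bδ aγ) hlδ
  obtain ⟨r, _, hrax, hrline, gate1⟩ := proj hT δ hgδ hlδ hbδ' aγ N₁ hN₁
  obtain ⟨N₂, hN₂⟩ := exists_N (l := transLen γ) (d := dist aγ r) hlγ
  obtain ⟨q, _, hqax, hqline, gate2⟩ := proj hT γ hgγ hlγ haγ' r N₂ hN₂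
  set lγ := transLen γ with hlγdef
  set lδ := transLen δ with hlδdef
  set w := dist r q with hw
  rcases eq_or_lt_of_le (dist_nonneg : (0:ℝ) ≤ w) with hw0 | hw0
  · -- the two projections coincide: intersection point
    have : r = q := dist_eq_zero.mp hw0.symm
    exact ⟨q, by show dist q (γ q) = transLen γ; exact hqax,
      by show dist q (δ q) = transLen δ; rw [← this]; exact hrax⟩
  -- otherwise the bridge is nontrivial; contradiction with h1
  exfalso
  set v := dist aγ r with hv
  -- line memberships
  have mδr : OnLine δ bδ (δ r) := onLine_map δ hrline
  have mδir : OnLine δ bδ (δ.symm r) := onLine_symm_map δ hrline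
  have mγq : OnLine γ aγ (γ q) := onLine_map γ hqline
  have mγiq : OnLine γ aγ (γ.symm q) := onLine_symm_map γ hqline
  have maγ : OnLine γ aγ aγ := onLine_self γ aγ
  -- basic displacements
  have dqγq : dist q (γ q) = lγ := hqax
  have dqγiq : dist q (γ.symm q) = lγ := by rw [symm_disp]; exact hqax
  have drδr : dist r (δ r) = lδ := hrax
  have drδir : dist r (δ.symm r) = lδ := by rw [symm_disp]; exact hrax
  -- gate2 facts
  have G2a : dist r aγ = w + dist q aγ := gate2 aγ maγ
  have G2γq : dist r (γ q) = w + lγ := by rw [gate2 (γ q) mγq, dqγq]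
  have G2γiq : dist r (γ.symm q) = w + lγ := by rw [gate2 (γ.symm q) mγiq, dqγiq]
  -- δ-gate of q is r
  have G3 : ∀ z, OnLine δ bδ z → dist q z = w + dist r z := by
    intro z hz
    have up : dist q z ≤ w + dist r z := by
      calc dist q z ≤ dist q r + dist r z := dist_triangle _ _ _
        _ = w + dist r z := by rw [dist_comm q r]
    have daγq : dist aγ q = v - w := by
      have h' := gate2 aγ maγ
      rw [dist_comm r aγ, dist_comm q aγ] at h'
      linarith
    have dn : dist aγ z ≤ dist aγ q + dist q z := dist_triangle _ _ _
    rw [gate1 z hz, daγq] at dn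
    linarith
  have D1 : dist q (δ r) = w + lδ := by rw [G3 (δ r) mδr, drδr]
  have hqrδr : Btw q r (δ r) := by unfold Btw; rw [drδr, D1, dist_comm q r]
  have hrqz : ∀ z, OnLine γ aγ z → Btw r q z := by
    intro z hz
    unfold Btw
    rw [gate2 z hz]
  -- position of δ r relative to the γ-line
  have D2 : ∀ z, OnLine γ aγ z → dist (δ r) z = lδ + w + dist q z := by
    intro z hz
    have hchain : Btw (δ r) r z := chain hT (btw_symm hqrδr) (hrqz z hz) hw0
    unfold Btw at hchain
    rw [dist_comm (δ r) r, drδr, gate2 z hz] at hchain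
    linarith
  have D3 : dist q (γ (δ r)) = lδ + w + lγ := by
    have e : dist q (γ (δ r)) = dist (γ.symm q) (δ r) := by
      rw [← γ.dist_eq (γ.symm q) (δ r), γ.apply_symm_apply]
    rw [e, dist_comm (γ.symm q) (δ r), D2 (γ.symm q) mγiq, dqγiq]
  have D4 : dist (γ q) (γ (δ r)) = w + lδ := by rw [γ.dist_eq, D1]
  have D5 : Btw r q (γ q) := hrqz (γ q) mγq
  have D6 : Btw r q (γ (δ r)) := by
    apply gate hT D5
    unfold Gp
    rw [dqγq, D3, D4]
    linarith
  set lam := lγ + lδ + 2 * w with hlam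
  have F1 : dist r (γ (δ r)) = lam := by
    unfold Btw at D6
    rw [D3] at D6
    rw [← D6, hlam, hw]
    ring
  have F2pre : ∀ z, OnLine δ bδ z → dist (γ (δ r)) z = lam + dist r z := by
    intro z hz
    have hqz : Btw q r z := by unfold Btw; rw [G3 z hz, dist_comm q r]
    have hchain : Btw (γ (δ r)) q z := chain hT (btw_symm D6) hqz (by rw [dist_comm]; exact hw0)
    unfold Btw at hchain
    rw [dist_comm (γ (δ r)) q, D3, G3 z hz] at hchain
    rw [← hchain, hlam, hw]
    ring
  have D7a : dist (δ (γ (δ r))) (δ r) = lam := by rw [δ.dist_eq, dist_comm, F1]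
  have D7b : dist (δ (γ (δ r))) r = lam + lδ := by
    have e : dist (δ (γ (δ r))) r = dist (γ (δ r)) (δ.symm r) := by
      rw [← δ.dist_eq (γ (δ r)) (δ.symm r), δ.apply_symm_apply]
    rw [e, F2pre (δ.symm r) mδir, drδir]
  have D8 : Btw (δ (γ (δ r))) (δ r) r := by
    unfold Btw
    rw [D7a, dist_comm (δ r) r, drδr, D7b]
  have D9 : dist (δ (γ (δ r))) q = lam + lδ + w := by
    have hchain : Btw (δ (γ (δ r))) (δ r) q :=
      chain hT D8 (btw_symm hqrδr) (by rw [dist_comm (δ r) r, drδr]; exact hlδ)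
    unfold Btw at hchain
    rw [D7a, dist_comm (δ r) q, D1] at hchain
    linarith
  have D10 : Btw (δ (γ (δ r))) r q := by
    unfold Btw
    rw [D7b, D9, ← hw]
  have D11 : dist (δ (γ (δ r))) (γ.symm q) = lam + lδ + w + lγ := by
    have hchain : Btw (δ (γ (δ r))) r (γ.symm q) :=
      chain hT D10 (hrqz (γ.symm q) mγiq) hw0
    unfold Btw at hchain
    rw [D7b, G2γiq] at hchain
    linarith
  have D12a : dist q (γ (δ (γ (δ r)))) = lam + lδ + w + lγ := by
    have e : dist q (γ (δ (γ (δ r)))) = dist (γ.symm q) (δ (γ (δ r))) := by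
      rw [← γ.dist_eq (γ.symm q) (δ (γ (δ r))), γ.apply_symm_apply]
    rw [e, dist_comm, D11]
  have D12b : dist (γ q) (γ (δ (γ (δ r)))) = lam + lδ + w := by
    rw [γ.dist_eq, dist_comm, D9]
  have D13 : dist r (γ (δ (γ (δ r)))) = 2 * lam := by
    have hB : Btw r q (γ (δ (γ (δ r)))) := by
      apply gate hT D5
      unfold Gp
      rw [dqγq, D12a, D12b]
      linarith
    unfold Btw at hB
    rw [D12a, ← hw] at hB
    rw [← hB, hlam]
    ring
  have hmid : Btw r (γ (δ r)) (γ (δ (γ (δ r)))) := by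
    unfold Btw
    have e : dist (γ (δ r)) (γ (δ (γ (δ r)))) = lam := by
      rw [γ.dist_eq, δ.dist_eq, F1]
    rw [F1, e, D13]
    ring
  -- apply the displacement bound to γ∘δ
  have hB' : Btw r ((δ.trans γ) r) ((δ.trans γ) ((δ.trans γ) r)) := by
    simpa [IsometryEquiv.trans_apply] using hmid
  have hlow : lam ≤ transLen (δ.trans γ) := by
    apply le_transLen
    intro y
    have h' := lemL hT (δ.trans γ) r hB' y
    have e : dist r ((δ.trans γ) r) = lam := by
      simpa [IsometryEquiv.trans_apply] using F1
    rwa [e] at h'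
  rw [h1] at hlow
  rw [hlam] at hlow
  linarith [hw0, hlow]

end Stage6
end RTreeAux
namespace RTreeAux
section Stage7
variable {T : Type*} [MetricSpace T]

lemma pt_one (g : T ≃ᵢ T) (b : T) : pt g b 1 = g b := by
  show (⇑g)^[1] b = g b
  simp

lemma pt_neg_one (g : T ≃ᵢ T) (b : T) : pt g b (-1) = g.symm b := by
  show (⇑g.symm)^[0+1] b = g.symm b
  simp

lemma transLen_ext {g h : T ≃ᵢ T} (he : ∀ x, g x = h x) : transLen g = transLen h := by
  unfold transLen
  exact iInf_congr fun x => by rw [he x]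

/-- A point between two points of a segment is on the segment. -/
lemma btw_mem (hT : IsRTree T) {A B a b x : T} (ha : Btw A a B) (hb : Btw A b B)
    (hx : Btw a x b) : Btw A x B := by
  have hab := coord_dist hT ha hb
  unfold Btw at *
  have t1 : dist A x ≤ dist A a + dist a x := dist_triangle _ _ _
  have t1' : dist A x ≤ dist A b + dist b x := dist_triangle _ _ _
  have t2 : dist x B ≤ dist x b + dist b B := dist_triangle _ _ _
  have t2' : dist x B ≤ dist x a + dist a B := dist_triangle _ _ _
  have t3 : dist A B ≤ dist A x + dist x B := dist_triangle _ _ _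
  have hc1 : dist b x = dist x b := dist_comm _ _
  have hc2 : dist x a = dist a x := dist_comm _ _
  rcases abs_cases (dist A a - dist A b) with ⟨he, _⟩ | ⟨he, _⟩ <;> rw [he] at hab <;> linarith

section Side
variable (hT : IsRTree T) (g : T ≃ᵢ T) {l : ℝ}
  (hg : ∀ y, l ≤ dist y (g y)) (hl : 0 < l)

include hT hg hl in
lemma axis_online {p x : T} (hp : dist p (g p) = l) (hx : dist x (g x) = l) :
    OnLine g p x := by
  obtain ⟨N, hN⟩ := exists_N (l := l) (d := dist p x) hl
  obtain ⟨m, hdisp, _, hmline, _⟩ := proj hT g hg hl hp x N hN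
  have hxm : x = m := by
    rw [hx] at hdisp
    have : dist x m = 0 := by linarith
    exact dist_eq_zero.mp this
  rwa [hxm]

include hT hg hl in
lemma side_data {p q q' : T} (hp : dist p (g p) = l) (hq : dist q (g q) = l)
    (hq'1 : Btw p q' q) (hε0 : 0 < dist p q') (hεl : dist p q' ≤ l) :
    (dist q' (g p) = l - dist p q' ∧ dist q' (g.symm p) = l + dist p q') ∨
    (dist q' (g p) = l + dist p q' ∧ dist q' (g.symm p) = l - dist p q') := by
  have D := pt_dist hT g hg hl hp
  obtain ⟨i, j, hij, hB⟩ := axis_online hT g hg hl hp hq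
  set I := min i (-1 : ℤ) with hIdef
  set J := max j (1 : ℤ) with hJdef
  have hI1 : I ≤ -1 := min_le_right _ _
  have hJ1 : (1:ℤ) ≤ J := le_max_right _ _
  have hIr : (I:ℝ) ≤ -1 := by exact_mod_cast hI1
  have hJr : (1:ℝ) ≤ (J:ℝ) := by exact_mod_cast hJ1
  have hBq : Btw (pt g p I) q (pt g p J) :=
    onLine_widen hT g hg hl hp (min_le_left _ _) (le_max_left _ _) hij hB
  have hBp : Btw (pt g p I) p (pt g p J) := by
    have := pt_btw hT g hg hl hp (le_trans hI1 (by omega) : I ≤ 0) (by omega : (0:ℤ) ≤ J)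
    rwa [pt_zero] at this
  have hBq' : Btw (pt g p I) q' (pt g p J) := btw_mem hT hBp hBq hq'1
  have hB1 : Btw (pt g p I) (pt g p 1) (pt g p J) :=
    pt_btw hT g hg hl hp (by omega) hJ1
  have hBm1 : Btw (pt g p I) (pt g p (-1)) (pt g p J) :=
    pt_btw hT g hg hl hp hI1 (by omega)
  -- coordinates
  have cp : dist (pt g p I) p = (-(I:ℝ)) * l := by
    have h' := D I 0
    rw [pt_zero] at h'
    rw [h', abs_of_nonpos (by push_cast; linarith)]
    push_cast; ring
  have c1 : dist (pt g p I) (pt g p 1) = (1 - (I:ℝ)) * l := by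
    rw [D I 1, abs_of_nonpos (by push_cast; linarith)]
    push_cast; ring
  have cm1 : dist (pt g p I) (pt g p (-1)) = (-1 - (I:ℝ)) * l := by
    rw [D I (-1), abs_of_nonpos (by push_cast; linarith)]
    push_cast; ring
  have e1 : dist p q' = |(-(I:ℝ)) * l - dist (pt g p I) q'| := by
    have h' := coord_dist hT hBp hBq'
    rwa [cp] at h'
  have e3 : dist p q = |(-(I:ℝ)) * l - dist (pt g p I) q| := by
    have h' := coord_dist hT hBp hBq
    rwa [cp] at h'
  have e2 : dist q' q = |dist (pt g p I) q' - dist (pt g p I) q| :=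
    coord_dist hT hBq' hBq
  have hq'q : dist q' q = dist p q - dist p q' := by
    unfold Btw at hq'1; linarith
  have f1 : dist q' (pt g p 1) = |dist (pt g p I) q' - (1 - (I:ℝ)) * l| := by
    have h' := coord_dist hT hBq' hB1
    rwa [c1] at h'
  have fm1 : dist q' (pt g p (-1)) = |dist (pt g p I) q' - (-1 - (I:ℝ)) * l| := by
    have h' := coord_dist hT hBq' hBm1
    rwa [cm1] at h'
  rw [pt_one] at f1
  rw [pt_neg_one] at fm1
  have hεs : dist p q' ≤ dist p q := by
    unfold Btw at hq'1
    linarith [dist_nonneg (x := q') (y := q)]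
  -- case analysis on the side of q
  rcases abs_cases ((-(I:ℝ)) * l - dist (pt g p I) q) with ⟨hcq, _⟩ | ⟨hcq, _⟩ <;>
    rw [hcq] at e3
  · -- q at coordinate -I*l - s  (the "negative" side)
    have hcq' : dist (pt g p I) q' = (-(I:ℝ)) * l - dist p q' := by
      rcases abs_cases ((-(I:ℝ)) * l - dist (pt g p I) q') with ⟨hc, _⟩ | ⟨hc, _⟩ <;>
        rw [hc] at e1
      · linarith
      · exfalso
        rcases abs_cases (dist (pt g p I) q' - dist (pt g p I) q) with ⟨hc2, _⟩ | ⟨hc2, _⟩ <;>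
          rw [hc2] at e2 <;> linarith
    refine Or.inr ⟨?_, ?_⟩
    · rw [f1, hcq', abs_of_nonpos (by linarith)]; ring
    · rw [fm1, hcq', abs_of_nonneg (by linarith)]; ring
  · -- q at coordinate -I*l + s
    have hcq' : dist (pt g p I) q' = (-(I:ℝ)) * l + dist p q' := by
      rcases abs_cases ((-(I:ℝ)) * l - dist (pt g p I) q') with ⟨hc, _⟩ | ⟨hc, _⟩ <;>
        rw [hc] at e1
      · exfalso
        rcases abs_cases (dist (pt g p I) q' - dist (pt g p I) q) with ⟨hc2, _⟩ | ⟨hc2, _⟩ <;>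
          rw [hc2] at e2 <;> linarith
      · linarith
    refine Or.inl ⟨?_, ?_⟩
    · rw [f1, hcq', abs_of_nonpos (by linarith)]; ring
    · rw [fm1, hcq', abs_of_nonneg (by linarith)]; ring

end Side
end Stage7
end RTreeAux

namespace RTreeAux
section Stage8
variable {T : Type*} [MetricSpace T]

lemma uniq_meet [Nonempty T] (hT : IsRTree T) (γ δ : T ≃ᵢ T)
    (hγ : IsHyperbolicIso γ) (hδ : IsHyperbolicIso δ)
    (h1 : transLen (δ.trans γ) = transLen γ + transLen δ)
    (h2 : transLen (δ.symm.trans γ) = transLen γ + transLen δ) :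
    ∀ p q : T, p ∈ axisSet γ ∩ axisSet δ → q ∈ axisSet γ ∩ axisSet δ → p = q := by
  intro p q hp hq
  by_contra hne
  have hs : 0 < dist p q := dist_pos.mpr hne
  have hlγ := hγ.1
  have hlδ := hδ.1
  have hgγ : ∀ y, transLen γ ≤ dist y (γ y) := fun y => transLen_le γ y
  have hgδ : ∀ y, transLen δ ≤ dist y (δ y) := fun y => transLen_le δ y
  set ε := min (dist p q) (min (transLen γ) (transLen δ)) / 2 with hε
  have hε0 : 0 < ε := by
    apply div_pos _ (by norm_num)
    exact lt_min hs (lt_min hlγ hlδ)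
  have hm1 := min_le_left (dist p q) (min (transLen γ) (transLen δ))
  have hm2 := min_le_right (dist p q) (min (transLen γ) (transLen δ))
  have hm3 := min_le_left (transLen γ) (transLen δ)
  have hm4 := min_le_right (transLen γ) (transLen δ)
  have hεs : ε < dist p q := by rw [hε]; linarith
  have hεγ : ε ≤ transLen γ := by rw [hε]; linarith
  have hεδ : ε ≤ transLen δ := by rw [hε]; linarith
  obtain ⟨q', hq'b, hq'd⟩ := exists_btw hT p q (le_of_lt hε0) (le_of_lt hεs)
  have hε0' : 0 < dist p q' := by rw [hq'd]; exact hε0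
  have hpγ : dist p (γ p) = transLen γ := hp.1
  have hpδ : dist p (δ p) = transLen δ := hp.2
  have hqγ : dist q (γ q) = transLen γ := hq.1
  have hqδ : dist q (δ q) = transLen δ := hq.2
  have hγside := side_data hT γ hgγ hlγ hpγ hqγ hq'b hε0' (by rw [hq'd]; exact hεγ)
  have hδside := side_data hT δ hgδ hlδ hpδ hqδ hq'b hε0' (by rw [hq'd]; exact hεδ)
  rcases hγside with ⟨dγ1, dγ2⟩ | ⟨dγ1, dγ2⟩ <;> rcases hδside with ⟨dδ1, dδ2⟩ | ⟨dδ1, dδ2⟩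
  · -- γ forward, δ forward : use γ ∘ δ⁻¹ at δ p
    have key : transLen (δ.symm.trans γ) ≤ dist (δ p) ((δ.symm.trans γ) (δ p)) :=
      transLen_le _ _
    have happ : (δ.symm.trans γ) (δ p) = γ p := by simp
    rw [happ, h2] at key
    have tri : dist (δ p) (γ p) ≤ dist (δ p) q' + dist q' (γ p) := dist_triangle _ _ _
    rw [dist_comm (δ p) q', dγ1, dδ1] at tri
    linarith
  · -- γ forward, δ backward : use γ ∘ δ at δ⁻¹ p
    have key : transLen (δ.trans γ) ≤ dist (δ.symm p) ((δ.trans γ) (δ.symm p)) :=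
      transLen_le _ _
    have happ : (δ.trans γ) (δ.symm p) = γ p := by simp
    rw [happ, h1] at key
    have tri : dist (δ.symm p) (γ p) ≤ dist (δ.symm p) q' + dist q' (γ p) := dist_triangle _ _ _
    rw [dist_comm (δ.symm p) q', dγ1, dδ2] at tri
    linarith
  · -- γ backward, δ forward : use γ⁻¹ ∘ δ⁻¹ at δ p
    have happ : (δ.symm.trans γ.symm) (δ p) = γ.symm p := by simp
    have hMs : ∀ x, (δ.symm.trans γ.symm).symm x = (γ.trans δ) x := by
      intro x
      rw [IsometryEquiv.symm_apply_eq]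
      simp
    have hM : transLen (δ.symm.trans γ.symm) = transLen (δ.trans γ) := by
      rw [← transLen_symm (δ.symm.trans γ.symm), transLen_ext hMs,
        transLen_trans_comm γ δ]
    have key : transLen (δ.symm.trans γ.symm) ≤ dist (δ p) ((δ.symm.trans γ.symm) (δ p)) :=
      transLen_le _ _
    rw [happ, hM, h1] at key
    have tri : dist (δ p) (γ.symm p) ≤ dist (δ p) q' + dist q' (γ.symm p) := dist_triangle _ _ _
    rw [dist_comm (δ p) q', dγ2, dδ1] at tri
    linarith
  · -- γ backward, δ backward : use γ⁻¹ ∘ δ at δ⁻¹ p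
    have happ : (δ.trans γ.symm) (δ.symm p) = γ.symm p := by simp
    have hMs : ∀ x, (δ.trans γ.symm).symm x = (γ.trans δ.symm) x := by
      intro x
      rw [IsometryEquiv.symm_apply_eq]
      simp
    have hM : transLen (δ.trans γ.symm) = transLen (δ.symm.trans γ) := by
      rw [← transLen_symm (δ.trans γ.symm), transLen_ext hMs,
        transLen_trans_comm γ δ.symm]
    have key : transLen (δ.trans γ.symm) ≤ dist (δ.symm p) ((δ.trans γ.symm) (δ.symm p)) :=
      transLen_le _ _
    rw [happ, hM, h2] at key
    have tri : dist (δ.symm p) (γ.symm p) ≤ dist (δ.symm p) q' + dist q' (γ.symm p) :=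
      dist_triangle _ _ _
    rw [dist_comm (δ.symm p) q', dγ2, dδ2] at tri
    linarith

end Stage8
end RTreeAux


/-- If `γ, δ` are hyperbolic isometries of a real tree with
`l(γδ) = l(γδ⁻¹) = l(γ) + l(δ)`, then the axes `A_γ` and `A_δ` intersect in
exactly one point.  (Here `γδ` acts by `x ↦ γ (δ x)`.) -/
theorem rtree_axes_meet_in_one_point {T : Type*} [MetricSpace T] [Nonempty T]
    (hT : IsRTree T) (γ δ : T ≃ᵢ T)
    (hγ : IsHyperbolicIso γ) (hδ : IsHyperbolicIso δ)
    (h1 : transLen (δ.trans γ) = transLen γ + transLen δ)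
    (h2 : transLen (δ.symm.trans γ) = transLen γ + transLen δ) :
    ∃! p : T, p ∈ axisSet γ ∩ axisSet δ := by
  obtain ⟨P, hP⟩ := RTreeAux.exist_meet hT γ δ hγ hδ h1
  exact ⟨P, hP, fun y hy => RTreeAux.uniq_meet hT γ δ hγ hδ h1 h2 y P hy hP⟩
end

section
/- Let γ be a hyperbolic isometry of a real tree T with axis A_γ and suppose γ = αβ where α, β are hyperbolic with disjoint axes A_α, A_β. If x ∈ A_α and y ∈ A_β are the endpoints of the bridge between the axes, then x lies on both the axis of αβ and the axis of αβ⁻¹, and d(x, αβx) = d(x, αβ⁻¹x). -/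
/-- The distance between two subsets of a metric space. -/
noncomputable def setDist {T : Type*} [MetricSpace T] (s t : Set T) : ℝ :=
  sInf (Set.image2 dist s t)

section Aux
variable {T : Type*} [MetricSpace T]

lemma dsymm (γ : T ≃ᵢ T) (u v : T) : dist (γ.symm u) v = dist u (γ v) := by
  rw [← γ.dist_eq, γ.apply_symm_apply]

lemma dist_symm_apply (γ : T ≃ᵢ T) (p : T) : dist p (γ.symm p) = dist p (γ p) := by
  rw [dist_comm, dsymm, dist_comm]

lemma distBdd (γ : T ≃ᵢ T) : BddBelow (Set.range fun z : T => dist z (γ z)) :=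
  ⟨0, by rintro r ⟨z, rfl⟩; exact dist_nonneg⟩

lemma transLen_le (γ : T ≃ᵢ T) (z : T) : transLen γ ≤ dist z (γ z) :=
  ciInf_le (distBdd γ) z


/-- Distance from any point to a point on a geodesic, in a 0-hyperbolic space. -/
lemma lemG (h4 : ∀ x y z w : T, dist x y + dist z w ≤ max (dist x z + dist y w) (dist x w + dist y z))
    {x y : T} {f : ℝ → T}
    (hf0 : f 0 = x) (hfd : f (dist x y) = y)
    (hf : ∀ s ∈ Set.Icc (0:ℝ) (dist x y), ∀ t ∈ Set.Icc (0:ℝ) (dist x y),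
      dist (f s) (f t) = |s - t|)
    {t : ℝ} (ht : t ∈ Set.Icc (0:ℝ) (dist x y)) (p : T) :
    dist p (f t) = max (dist p x - t) (dist p y - (dist x y - t)) := by
  have h0 : (0:ℝ) ∈ Set.Icc (0:ℝ) (dist x y) := ⟨le_refl _, dist_nonneg⟩
  have hd : dist x y ∈ Set.Icc (0:ℝ) (dist x y) := ⟨dist_nonneg, le_refl _⟩
  have e1 : dist x (f t) = t := by
    rw [← hf0, hf 0 h0 t ht, abs_sub_comm, sub_zero, abs_of_nonneg ht.1]
  have e2 : dist (f t) y = dist x y - t := by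
    have h := hf t ht (dist x y) hd
    rw [hfd] at h
    rw [h, abs_of_nonpos (by linarith [ht.2]), neg_sub]
  have h := h4 p (f t) x y
  rw [e2, dist_comm (f t) x, e1] at h
  apply le_antisymm
  · rcases le_max_iff.mp h with h | h
    · exact le_max_of_le_left (by linarith)
    · exact le_max_of_le_right (by linarith)
  · apply max_le
    · have := dist_triangle p (f t) x
      rw [dist_comm (f t) x, e1] at this; linarith
    · have := dist_triangle p (f t) y
      rw [e2] at this; linarith

/-- On the axis of a hyperbolic isometry, `d(p, g² p) = 2 l(g)`. -/
lemma two_translate (hT : IsRTree T) (g : T ≃ᵢ T) (hl : 0 < transLen g)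
    {p : T} (hp : dist p (g p) = transLen g) :
    dist p (g (g p)) = 2 * transLen g := by
  obtain ⟨f, hf0, hfd, hf⟩ := hT.1 p (g p)
  have hd0 : (0:ℝ) ≤ dist p (g p) := dist_nonneg
  have htm : dist p (g p)/2 ∈ Set.Icc (0:ℝ) (dist p (g p)) := ⟨by linarith, by linarith⟩
  have hgg : dist (g p) (g (g p)) = dist p (g p) := g.dist_eq p (g p)
  have e1 : dist (g (g p)) (f (dist p (g p)/2)) =
      max (dist (g (g p)) p - dist p (g p)/2)
        (dist (g (g p)) (g p) - (dist p (g p) - dist p (g p)/2)) :=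
    lemG hT.2 hf0 hfd hf htm (g (g p))
  rw [dist_comm (g (g p)) (g p), hgg] at e1
  have hgf0 : (fun s => g (f s)) 0 = g p := by show g (f 0) = g p; rw [hf0]
  have hgfd : (fun s => g (f s)) (dist (g p) (g (g p))) = g (g p) := by
    show g (f (dist (g p) (g (g p)))) = g (g p); rw [hgg, hfd]
  have hgf : ∀ s ∈ Set.Icc (0:ℝ) (dist (g p) (g (g p))),
      ∀ t ∈ Set.Icc (0:ℝ) (dist (g p) (g (g p))),
      dist ((fun s => g (f s)) s) ((fun s => g (f s)) t) = |s - t| := by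
    rw [hgg]; intro s hs t ht'
    show dist (g (f s)) (g (f t)) = _
    rw [g.dist_eq]; exact hf s hs t ht'
  have htm' : dist p (g p)/2 ∈ Set.Icc (0:ℝ) (dist (g p) (g (g p))) := by
    rw [hgg]; exact htm
  have e2 : dist (f (dist p (g p)/2)) (g (f (dist p (g p)/2))) =
      max (dist (f (dist p (g p)/2)) (g p) - dist p (g p)/2)
        (dist (f (dist p (g p)/2)) (g (g p)) - (dist (g p) (g (g p)) - dist p (g p)/2)) :=
    lemG hT.2 hgf0 hgfd hgf htm' (f (dist p (g p)/2))
  have e3 : dist (f (dist p (g p)/2)) (g p) = dist p (g p) - dist p (g p)/2 := by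
    have h := hf (dist p (g p)/2) htm (dist p (g p)) ⟨hd0, le_refl _⟩
    rw [hfd] at h
    rw [h, abs_of_nonpos (by linarith), neg_sub]
  have hmin : transLen g ≤ dist (f (dist p (g p)/2)) (g (f (dist p (g p)/2))) :=
    transLen_le g _
  rw [e2, e3, hgg, dist_comm (f (dist p (g p)/2)) (g (g p)), e1] at hmin
  have hG : dist p (g (g p)) = dist (g (g p)) p := dist_comm _ _
  apply le_antisymm
  · have htri := dist_triangle p (g p) (g (g p))
    rw [hgg] at htri; linarith
  · rcases le_max_iff.mp hmin with h | h
    · linarith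
    · rcases le_or_gt (dist p (g p) - (dist p (g p) - dist p (g p)/2))
        (dist (g (g p)) p - dist p (g p)/2) with hc | hc
      · rw [max_eq_left hc] at h; rw [hG]; linarith
      · rw [max_eq_right hc.le] at h; linarith

/-- Gate/bridge lemma: if `x` minimizes distance to the axis of `g` at `y`,
then `d(x, g y) = d(x,y) + l(g)`. -/
lemma gate (hT : IsRTree T) (g : T ≃ᵢ T) (hl : 0 < transLen g)
    {y : T} (hy : dist y (g y) = transLen g) (x : T)
    (hmin : ∀ w, dist w (g w) = transLen g → dist x y ≤ dist x w) :
    dist x (g y) = dist x y + transLen g := by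
  apply le_antisymm
  · calc dist x (g y) ≤ dist x y + dist y (g y) := dist_triangle _ _ _
      _ = dist x y + transLen g := by rw [hy]
  by_contra hcon'
  have hcon : dist x (g y) < dist x y + transLen g := by
    rcases lt_or_ge (dist x (g y)) (dist x y + transLen g) with h | h
    · exact h
    · exact absurd h hcon'
  exfalso
  set ε := (dist x y + transLen g - dist x (g y)) / 2 with hε
  have hεpos : 0 < ε := by rw [hε]; linarith
  have hdxgy : dist x (g y) = dist x y + transLen g - 2 * ε := by rw [hε]; ring
  obtain ⟨f, hf0, hfd, hf⟩ := hT.1 y (g y)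
  set t := min ε (transLen g) with htdef
  have htpos : 0 < t := lt_min hεpos hl
  have htle : t ≤ transLen g := min_le_right _ _
  have htε : t ≤ ε := min_le_left _ _
  have htm : t ∈ Set.Icc (0:ℝ) (dist y (g y)) := ⟨htpos.le, by rw [hy]; exact htle⟩
  -- w := f t lies on the axis
  have hgg : dist (g y) (g (g y)) = dist y (g y) := g.dist_eq y (g y)
  have h2l : dist y (g (g y)) = 2 * transLen g := two_translate hT g hl hy
  -- dist (f t) (g y)
  have e3 : dist (f t) (g y) = dist y (g y) - t := by
    have h := hf t htm (dist y (g y)) ⟨dist_nonneg, le_refl _⟩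
    rw [hfd] at h
    rw [h, abs_of_nonpos (by linarith [htm.2]), neg_sub]
  -- dist (g (g y)) (f t)
  have e4 : dist (g (g y)) (f t) =
      max (dist (g (g y)) y - t) (dist (g (g y)) (g y) - (dist y (g y) - t)) :=
    lemG hT.2 hf0 hfd hf htm (g (g y))
  rw [dist_comm (g (g y)) y, h2l, dist_comm (g (g y)) (g y), hgg, hy] at e4
  have e4' : dist (g (g y)) (f t) = 2 * transLen g - t := by
    rw [e4]; rw [max_eq_left (by linarith)]
  -- the image geodesic
  have hgf0 : (fun s => g (f s)) 0 = g y := by show g (f 0) = g y; rw [hf0]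
  have hgfd : (fun s => g (f s)) (dist (g y) (g (g y))) = g (g y) := by
    show g (f (dist (g y) (g (g y)))) = g (g y); rw [hgg, hfd]
  have hgf : ∀ s ∈ Set.Icc (0:ℝ) (dist (g y) (g (g y))),
      ∀ u ∈ Set.Icc (0:ℝ) (dist (g y) (g (g y))),
      dist ((fun s => g (f s)) s) ((fun s => g (f s)) u) = |s - u| := by
    rw [hgg]; intro s hs u hu
    show dist (g (f s)) (g (f u)) = _
    rw [g.dist_eq]; exact hf s hs u hu
  have htm' : t ∈ Set.Icc (0:ℝ) (dist (g y) (g (g y))) := by rw [hgg]; exact htm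
  have e5 : dist (f t) (g (f t)) =
      max (dist (f t) (g y) - t) (dist (f t) (g (g y)) - (dist (g y) (g (g y)) - t)) :=
    lemG hT.2 hgf0 hgfd hgf htm' (f t)
  rw [e3, hgg, hy, dist_comm (f t) (g (g y)), e4'] at e5
  have hw : dist (f t) (g (f t)) = transLen g := by
    rw [e5]; rw [max_eq_right (by linarith)]; ring
  -- distance from x to w
  have e6 : dist x (f t) = max (dist x y - t) (dist x (g y) - (dist y (g y) - t)) :=
    lemG hT.2 hf0 hfd hf htm x
  have hlt : dist x (f t) < dist x y := by
    rw [e6, hy, hdxgy]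
    apply max_lt <;> linarith
  exact absurd (hmin _ hw) (not_le.mpr hlt)

/-- Key inequality: `d(p, g²p) - d(p, gp) ≤ d(z, gz)` in a 0-hyperbolic space. -/
lemma lemL (h4 : ∀ x y z w : T, dist x y + dist z w ≤ max (dist x z + dist y w) (dist x w + dist y z))
    (g : T ≃ᵢ T) (p z : T) :
    dist p (g (g p)) - dist p (g p) ≤ dist z (g z) := by
  have h := h4 p (g (g p)) (g z) (g p)
  rw [g.dist_eq z p, g.dist_eq (g p) p, dist_comm (g p) p] at h
  rw [show dist (g (g p)) (g z) = dist (g p) z from g.dist_eq (g p) z] at h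
  rcases le_max_iff.mp h with h | h
  · have t1 := dist_triangle p z (g z)
    have := dist_comm z p
    linarith
  · have t2 := dist_triangle (g p) (g z) (g z)
    have t3 := dist_triangle (g p) (g z) z
    have e : dist (g p) (g z) = dist p z := g.dist_eq p z
    rw [e] at t3
    have := dist_comm z p
    have := dist_comm (g z) z
    linarith

/-- The main metric calculation along the bridge. -/
lemma CALC (h4 : ∀ x y z w : T, dist x y + dist z w ≤ max (dist x z + dist y w) (dist x w + dist y z))
    (α β : T ≃ᵢ T) (x y : T)
    (ha : 0 < dist x (α x)) (hb : 0 < dist y (β y)) (hΔ : 0 < dist x y)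
    (H1 : dist y (α x) = dist x y + dist x (α x))
    (H2 : dist y (α.symm x) = dist x y + dist x (α x))
    (H3 : dist x (β y) = dist x y + dist y (β y))
    (H4 : dist x (β.symm y) = dist x y + dist y (β y)) :
    dist x (α (β x)) = dist x (α x) + dist y (β y) + 2 * dist x y ∧
    dist x (α (β (α (β x)))) = 2 * (dist x (α x) + dist y (β y) + 2 * dist x y) := by
  have nβ : ∀ u v : T, dist (β.symm u) v = dist u (β v) := fun u v => dsymm β u v
  have nα : ∀ u v : T, dist (α.symm u) v = dist u (α v) := fun u v => dsymm α u v
  -- Step 1 : d(x, β⁻¹x) = 2Δ + b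
  have n1 : dist (β.symm x) y = dist x (β y) := nβ x y
  have n2 : dist (β.symm y) y = dist y (β y) := nβ y y
  have n3 : dist (β.symm y) (β.symm x) = dist x y :=
    (β.symm.dist_eq y x).trans (dist_comm y x)
  have c2 : dist x (β.symm x) = 2 * dist x y + dist y (β y) := by
    have h := h4 x (β.symm y) (β.symm x) y
    rw [H4, n1, H3, n2, n3] at h
    have up : dist x (β.symm x) ≤ dist x y + dist y (β.symm x) := dist_triangle _ _ _
    rw [dist_comm y (β.symm x), n1, H3] at up
    rcases le_max_iff.mp h with h | h <;> linarith
  have c3 : dist x (β x) = 2 * dist x y + dist y (β y) := by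
    rw [← nβ x x, dist_comm (β.symm x) x, c2]
  have c4 : dist y (β x) = dist x y + dist y (β y) := by
    rw [← nβ y x, dist_comm (β.symm y) x, H4]
  -- Step 2 : d(α⁻¹x, βx) = a + b + 2Δ
  have c5 : dist (α.symm x) (β x) = dist x (α x) + dist y (β y) + 2 * dist x y := by
    have h := h4 (α.symm x) y (β x) x
    rw [dist_comm (α.symm x) y, H2, dist_comm (β x) x, c3, dist_comm y x,
      nα x x, c4] at h
    have up : dist (α.symm x) (β x) ≤ dist (α.symm x) x + dist x (β x) :=
      dist_triangle _ _ _
    rw [nα x x, c3] at up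
    rcases le_max_iff.mp h with h | h <;> linarith
  have c6 : dist x (α (β x)) = dist x (α x) + dist y (β y) + 2 * dist x y := by
    rw [← nα x (β x), c5]
  -- Step 3 : intermediate distances
  have c7 : dist (β y) (α.symm x) = dist x (α x) + dist y (β y) + dist x y := by
    have h := h4 (β y) x (α.symm x) y
    rw [dist_comm (β y) x, H3, dist_comm (α.symm x) y, H2, dist_comm (β y) y,
      dist_comm x (α.symm x), nα x x] at h
    have up : dist (β y) (α.symm x) ≤ dist (β y) y + dist y (α.symm x) :=
      dist_triangle _ _ _
    rw [dist_comm (β y) y, H2] at up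
    rcases le_max_iff.mp h with h | h <;> linarith
  have c10 : dist y (α (β x)) =
      dist x (α x) + dist y (β y) + 3 * dist x y := by
    have h := h4 y (α x) (α (β x)) x
    rw [H1, dist_comm (α (β x)) x, c6, dist_comm (α x) x, dist_comm y x,
      α.dist_eq x (β x), c3] at h
    have up : dist y (α (β x)) ≤ dist y x + dist x (α (β x)) := dist_triangle _ _ _
    rw [dist_comm y x, c6] at up
    rcases le_max_iff.mp h with h | h <;> linarith
  have c9 : dist x (β.symm (α.symm x)) =
      dist x (α x) + dist y (β y) + 2 * dist x y := by
    rw [dist_comm x (β.symm (α.symm x)), nβ (α.symm x) x, c5]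
  have c8 : dist y (β.symm (α.symm x)) =
      dist x (α x) + dist y (β y) + dist x y := by
    rw [dist_comm y (β.symm (α.symm x)), nβ (α.symm x) y,
      dist_comm (α.symm x) (β y), c7]
  have c11 : dist (β.symm (α.symm x)) (α (β x)) =
      2 * (dist x (α x) + dist y (β y) + 2 * dist x y) := by
    have h := h4 (α (β x)) y (β.symm (α.symm x)) x
    rw [dist_comm (α (β x)) y, c10, dist_comm (β.symm (α.symm x)) x, c9,
      dist_comm y x, dist_comm (α (β x)) x, c6, c8,
      dist_comm (α (β x)) (β.symm (α.symm x))] at h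
    have up : dist (β.symm (α.symm x)) (α (β x)) ≤
        dist (β.symm (α.symm x)) x + dist x (α (β x)) := dist_triangle _ _ _
    rw [dist_comm (β.symm (α.symm x)) x, c9, c6] at up
    rcases le_max_iff.mp h with h | h <;> linarith
  refine ⟨c6, ?_⟩
  rw [← nα x (β (α (β x))), ← nβ (α.symm x) (α (β x)), c11]

end Aux


lemma transLen_symm {T : Type*} [MetricSpace T] (γ : T ≃ᵢ T) :
    transLen γ.symm = transLen γ := by
  unfold transLen
  exact iInf_congr fun z => dist_symm_apply γ z

/-- Let `α, β` be hyperbolic isometries of a real tree with disjoint axes, and let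
`x ∈ A_α`, `y ∈ A_β` be the endpoints of the bridge between the axes (the segment
realizing the distance between them).  Then `x` lies on the axes of both `αβ` and
`αβ⁻¹`, and `d(x, αβ x) = d(x, αβ⁻¹ x)`.  (Here `αβ` acts by `x ↦ α (β x)`.) -/
theorem rtree_bridge_on_axis {T : Type*} [MetricSpace T] [Nonempty T]
    (hT : IsRTree T) (α β : T ≃ᵢ T)
    (hα : IsHyperbolicIso α) (hβ : IsHyperbolicIso β)
    (hdisj : Disjoint (axisSet α) (axisSet β))
    (x y : T) (hx : x ∈ axisSet α) (hy : y ∈ axisSet β)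
    (hbridge : dist x y = setDist (axisSet α) (axisSet β)) :
    x ∈ axisSet (β.trans α) ∧ x ∈ axisSet (β.symm.trans α) ∧
      dist x ((β.trans α) x) = dist x ((β.symm.trans α) x) := by
  obtain ⟨hαl, -⟩ := hα
  obtain ⟨hβl, -⟩ := hβ
  have hx' : dist x (α x) = transLen α := hx
  have hy' : dist y (β y) = transLen β := hy
  have hxy : x ≠ y := fun h => Set.disjoint_left.mp hdisj hx (h ▸ hy)
  have hΔ : 0 < dist x y := dist_pos.mpr hxy
  have ha : 0 < dist x (α x) := by rw [hx']; exact hαl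
  have hb : 0 < dist y (β y) := by rw [hy']; exact hβl
  have hbdd : BddBelow (Set.image2 dist (axisSet α) (axisSet β)) :=
    ⟨0, by rintro r ⟨u, hu, v, hv, rfl⟩; exact dist_nonneg⟩
  have hminβ : ∀ w, dist w (β w) = transLen β → dist x y ≤ dist x w := by
    intro w hw
    rw [hbridge]
    exact csInf_le hbdd (Set.mem_image2_of_mem hx hw)
  have hminα : ∀ w, dist w (α w) = transLen α → dist y x ≤ dist y w := by
    intro w hw
    rw [dist_comm y x, dist_comm y w, hbridge]
    exact csInf_le hbdd (Set.mem_image2_of_mem hw hy)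
  -- gate facts
  have H3 : dist x (β y) = dist x y + dist y (β y) := by
    rw [hy']; exact gate hT β hβl hy' x hminβ
  have H4 : dist x (β.symm y) = dist x y + dist y (β y) := by
    have hl' : 0 < transLen β.symm := by rw [transLen_symm]; exact hβl
    have hy'' : dist y (β.symm y) = transLen β.symm := by
      rw [dist_symm_apply, transLen_symm]; exact hy'
    have hmin'' : ∀ w, dist w (β.symm w) = transLen β.symm → dist x y ≤ dist x w := by
      intro w hw
      rw [dist_symm_apply, transLen_symm] at hw
      exact hminβ w hw
    have h := gate hT β.symm hl' hy'' x hmin''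
    rw [transLen_symm, ← hy'] at h
    exact h
  have H1 : dist y (α x) = dist x y + dist x (α x) := by
    have h := gate hT α hαl hx' y hminα
    rw [dist_comm y x, ← hx'] at h
    exact h
  have H2 : dist y (α.symm x) = dist x y + dist x (α x) := by
    have hl' : 0 < transLen α.symm := by rw [transLen_symm]; exact hαl
    have hx'' : dist x (α.symm x) = transLen α.symm := by
      rw [dist_symm_apply, transLen_symm]; exact hx'
    have hmin'' : ∀ w, dist w (α.symm w) = transLen α.symm → dist y x ≤ dist y w := by
      intro w hw
      rw [dist_symm_apply, transLen_symm] at hw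
      exact hminα w hw
    have h := gate hT α.symm hl' hx'' y hmin''
    rw [transLen_symm, dist_comm y x, ← hx'] at h
    exact h
  -- the two calculations
  obtain ⟨T1, T2⟩ := CALC hT.2 α β x y ha hb hΔ H1 H2 H3 H4
  have hb2 : 0 < dist y (β.symm y) := by rw [dist_symm_apply]; exact hb
  have H32 : dist x (β.symm y) = dist x y + dist y (β.symm y) := by
    rw [dist_symm_apply]; exact H4
  have H42 : dist x (β.symm.symm y) = dist x y + dist y (β.symm y) := by
    rw [IsometryEquiv.symm_symm, dist_symm_apply]; exact H3
  obtain ⟨T1', T2'⟩ := CALC hT.2 α β.symm x y ha hb2 hΔ H1 H2 H32 H42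
  rw [dist_symm_apply β y] at T1' T2'
  -- conclude for g = β.trans α
  have key : ∀ (g : T ≃ᵢ T),
      dist x (g x) = dist x (α x) + dist y (β y) + 2 * dist x y →
      dist x (g (g x)) = 2 * (dist x (α x) + dist y (β y) + 2 * dist x y) →
      x ∈ axisSet g := by
    intro g hg1 hg2
    have lower : ∀ z : T, dist x (α x) + dist y (β y) + 2 * dist x y ≤ dist z (g z) := by
      intro z
      have h := lemL hT.2 g x z
      rw [hg1, hg2] at h
      linarith
    have htl : transLen g = dist x (α x) + dist y (β y) + 2 * dist x y := by
      apply le_antisymm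
      · rw [← hg1]; exact transLen_le g x
      · exact le_ciInf lower
    show dist x (g x) = transLen g
    rw [htl, hg1]
  have e1 : ∀ z : T, (β.trans α) z = α (β z) := fun z => rfl
  have e2 : ∀ z : T, (β.symm.trans α) z = α (β.symm z) := fun z => rfl
  refine ⟨key (β.trans α) ?_ ?_, key (β.symm.trans α) ?_ ?_, ?_⟩
  · rw [e1]; exact T1
  · rw [e1, e1]; exact T2
  · rw [e2]; exact T1'
  · rw [e2, e2]; exact T2'
  · rw [e1, e2, T1, T1']
end
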